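/- arXiv:2602.09326 — 3 statements merged into one kernel-verified Lean document; each statement's English description precedes it below -/
import Mathlib

section
/- For an ordered partition poset, the weighted Shapley distribution p_WSV(π) = ∏_{t=1}^n λ_{π_t} / (∑_{k ∈ max_⪯(S_t)} λ_k) is a probability distribution on the set of linear extensions: its values are nonnegative and sum to 1 over all linear extensions π. -/
open Finset
open scoped Classical BigOperators

def IsLinExt {n : ℕ} (le : Fin n → Fin n → Prop) (π : Equiv.Perm (Fin n)) : Prop :=
  ∀ i j : Fin n, le i j → i ≠ j → ((π.symm i : ℕ) < (π.symm j : ℕ))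

def prefixSet {n : ℕ} (π : Equiv.Perm (Fin n)) (t : ℕ) : Finset (Fin n) :=
  Finset.univ.filter fun i => (π.symm i : ℕ) < t

noncomputable def maxSet {n : ℕ} (le : Fin n → Fin n → Prop) (S : Finset (Fin n)) :
    Finset (Fin n) :=
  S.filter fun i => ∀ j ∈ S, le i j → i = j

noncomputable def pasvW {n : ℕ} (le : Fin n → Fin n → Prop) (lam : Fin n → ℝ)
    (π : Equiv.Perm (Fin n)) : ℝ :=
  ∏ t : Fin n,
    lam (π t) * (maxSet le (prefixSet π (t.1 + 1))).card /
      ∑ k ∈ maxSet le (prefixSet π (t.1 + 1)), lam k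

noncomputable def pasvDist {n : ℕ} (le : Fin n → Fin n → Prop) (lam : Fin n → ℝ)
    (π : Equiv.Perm (Fin n)) : ℝ :=
  if IsLinExt le π then
    pasvW le lam π / ∑ σ ∈ Finset.univ.filter (fun σ => IsLinExt le σ), pasvW le lam σ
  else 0

def opLe {n m : ℕ} (blk : Fin n → Fin m) : Fin n → Fin n → Prop :=
  fun a b => a = b ∨ blk a < blk b

/-!
Put `p S k = λ k / ∑_{j ∈ max S} λ j` for `k` maximal in `S`, and `0` otherwise. In the block
order every nonempty set has a maximal element, so `p S` is a probability distribution on `S`.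
The weight of a linear extension `π` is `∏ₜ p Sₜ πₜ`, a product that vanishes for every other
permutation. Summing over the orderings of `S` whose last element is `k` factors off `p S k` and
leaves the same sum for `S \ {k}`, so by induction on `|S|` the total mass is `1`.
-/

section Orderings

variable {α R : Type*} [DecidableEq α]

def seqPrefix {d : ℕ} (g : Fin d → α) (t : ℕ) : Finset α :=
  (univ.filter fun s : Fin d => (s : ℕ) < t).image g

lemma seqPrefix_snoc {d t : ℕ} (g : Fin d → α) (k : α) (ht : t ≤ d) :
    seqPrefix (Fin.snoc g k : Fin (d + 1) → α) t = seqPrefix g t := by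
  ext x
  simp only [seqPrefix, mem_image, mem_filter, mem_univ, true_and]
  constructor
  · rintro ⟨s, hs, rfl⟩
    induction s using Fin.lastCases with
    | last => rw [Fin.val_last] at hs; omega
    | cast i => exact ⟨i, hs, by simp⟩
  · rintro ⟨s, hs, rfl⟩
    exact ⟨s.castSucc, hs, by simp⟩

lemma seqPrefix_of_le {d t : ℕ} (g : Fin d → α) (ht : d ≤ t) :
    seqPrefix g t = univ.image g := by
  rw [seqPrefix, filter_true_of_mem fun s _ => s.isLt.trans_le ht]

lemma image_snoc {d : ℕ} (g : Fin d → α) (k : α) :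
    univ.image (Fin.snoc g k : Fin (d + 1) → α) = insert k (univ.image g) := by
  apply coe_injective
  simp

lemma image_snoc_eq_iff {d : ℕ} {S : Finset α} (hS : #S = d + 1) (g : Fin d → α) (k : α) :
    univ.image (Fin.snoc g k : Fin (d + 1) → α) = S ↔ k ∈ S ∧ univ.image g = S.erase k := by
  rw [image_snoc]
  constructor
  · rintro rfl
    refine ⟨mem_insert_self _ _, ?_⟩
    have hk : k ∉ univ.image g := fun hk => by
      have := card_image_le (s := (univ : Finset (Fin d))) (f := g)
      rw [insert_eq_of_mem hk] at hS
      rw [card_univ, Fintype.card_fin] at this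
      omega
    rw [erase_insert hk]
  · rintro ⟨hk, hg⟩
    rw [hg, insert_erase hk]

variable [CommSemiring R]

def seqWeight (p : Finset α → α → R) {d : ℕ} (g : Fin d → α) : R :=
  ∏ t : Fin d, p (seqPrefix g (t + 1)) (g t)

lemma seqWeight_snoc (p : Finset α → α → R) {d : ℕ} (g : Fin d → α) (k : α) :
    seqWeight p (Fin.snoc g k : Fin (d + 1) → α) =
      seqWeight p g * p (insert k (univ.image g)) k := by
  rw [seqWeight, Fin.prod_univ_castSucc, seqWeight]
  congr 1
  · refine prod_congr rfl fun t _ => ?_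
    rw [Fin.snoc_castSucc, Fin.val_castSucc, seqPrefix_snoc _ _ (by omega)]
  · rw [Fin.snoc_last, Fin.val_last, seqPrefix_of_le _ le_rfl, image_snoc]

theorem sum_seqWeight_eq_one [Fintype α] (p : Finset α → α → R)
    (hp : ∀ S : Finset α, S.Nonempty → ∑ k ∈ S, p S k = 1) {d : ℕ} {S : Finset α}
    (hS : #S = d) :
    ∑ g : Fin d → α with univ.image g = S, seqWeight p g = 1 := by
  induction d generalizing S with
  | zero =>
    rw [card_eq_zero.1 hS]
    simp [seqWeight]
  | succ d ih =>
    calc ∑ g : Fin (d + 1) → α with univ.image g = S, seqWeight p g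
        = ∑ k, ∑ g' : Fin d → α,
            if k ∈ S ∧ univ.image g' = S.erase k then seqWeight p g' * p S k else 0 := by
          rw [sum_filter, ← (Fin.snocEquiv fun _ => α).sum_comp, Fintype.sum_prod_type]
          refine sum_congr rfl fun k _ => sum_congr rfl fun g' _ => ?_
          simp only [Fin.snocEquiv, Equiv.coe_fn_mk, image_snoc_eq_iff hS]
          split_ifs with h
          · rw [seqWeight_snoc, h.2, insert_erase h.1]
          · rfl
      _ = ∑ k ∈ S, (∑ g' : Fin d → α with univ.image g' = S.erase k, seqWeight p g') * p S k := by
          simp only [ite_and, sum_ite_irrel, sum_const_zero, Fintype.sum_ite_mem, sum_mul,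
            sum_filter, ite_mul, zero_mul]
      _ = ∑ k ∈ S, p S k :=
          sum_congr rfl fun k hk => by rw [ih (by rw [card_erase_of_mem hk, hS]; rfl), one_mul]
      _ = 1 := hp S (card_pos.1 (by omega))

end Orderings

lemma sum_perm_eq_sum_image_eq_univ {α M : Type*} [Fintype α] [DecidableEq α] [AddCommMonoid M]
    (f : (α → α) → M) :
    ∑ σ : Equiv.Perm α, f σ = ∑ g : α → α with univ.image g = univ, f g := by
  refine sum_nbij (⇑) (fun σ _ => ?_) (fun σ _ τ _ h => DFunLike.coe_injective h)
    (fun g hg => ?_) (fun _ _ => rfl)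
  · simp [image_univ_equiv]
  · have hsurj : Function.Surjective g := fun x => by
      have hx : x ∈ univ.image g := by rw [(mem_filter.1 hg).2]; exact mem_univ x
      simpa using hx
    exact ⟨Equiv.ofBijective g ⟨Finite.injective_iff_surjective.2 hsurj, hsurj⟩,
      mem_coe.2 (mem_univ _), rfl⟩

section WeightedShapley

variable {n : ℕ} (le : Fin n → Fin n → Prop) (lam : Fin n → ℝ)

noncomputable def maxKernel (S : Finset (Fin n)) (k : Fin n) : ℝ :=
  if k ∈ maxSet le S then lam k / ∑ j ∈ maxSet le S, lam j else 0

lemma maxSet_subset (S : Finset (Fin n)) : maxSet le S ⊆ S :=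
  filter_subset _ _

lemma sum_maxKernel {S : Finset (Fin n)} (hlam : ∀ i, 0 < lam i) (hS : (maxSet le S).Nonempty) :
    ∑ k ∈ S, maxKernel le lam S k = 1 := by
  simp only [maxKernel]
  rw [sum_ite_mem, inter_eq_right.2 (maxSet_subset le S), ← sum_div,
    div_self (sum_pos (fun i _ => hlam i) hS).ne']

lemma prefixSet_eq_seqPrefix (π : Equiv.Perm (Fin n)) (t : ℕ) :
    prefixSet π t = seqPrefix π t := by
  ext x
  simp only [prefixSet, seqPrefix, mem_filter, mem_image, mem_univ, true_and]
  exact ⟨fun h => ⟨π.symm x, h, π.apply_symm_apply x⟩, by rintro ⟨s, hs, rfl⟩; simpa using hs⟩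

lemma isLinExt_iff_forall_mem_maxSet (π : Equiv.Perm (Fin n)) :
    IsLinExt le π ↔ ∀ t : Fin n, π t ∈ maxSet le (prefixSet π (t + 1)) := by
  simp only [IsLinExt, maxSet, prefixSet, mem_filter, mem_univ, true_and, Equiv.symm_apply_apply]
  constructor
  · intro h t
    refine ⟨by omega, fun j hj hle => by_contra fun hne => ?_⟩
    have := h _ _ hle hne
    simp only [Equiv.symm_apply_apply] at this
    omega
  · intro h i j hle hne
    by_contra hlt
    exact hne (by simpa using (h (π.symm i)).2 j (by omega) (by simpa using hle))

lemma seqWeight_maxKernel (π : Equiv.Perm (Fin n)) :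
    seqWeight (maxKernel le lam) π = if IsLinExt le π then
      ∏ t : Fin n, lam (π t) / ∑ k ∈ maxSet le (prefixSet π (t + 1)), lam k else 0 := by
  simp only [seqWeight, ← prefixSet_eq_seqPrefix, maxKernel]
  split_ifs with h
  · exact prod_congr rfl fun t _ => if_pos ((isLinExt_iff_forall_mem_maxSet le π).1 h t)
  · obtain ⟨t, ht⟩ := not_forall.1 (mt (isLinExt_iff_forall_mem_maxSet le π).2 h)
    exact prod_eq_zero (mem_univ t) (if_neg ht)

theorem sum_isLinExt_prod_eq_one (hlam : ∀ i, 0 < lam i)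
    (hmax : ∀ S : Finset (Fin n), S.Nonempty → (maxSet le S).Nonempty) :
    ∑ π ∈ univ.filter (fun σ => IsLinExt le σ),
      ∏ t : Fin n, lam (π t) / ∑ k ∈ maxSet le (prefixSet π (t + 1)), lam k = 1 := by
  calc _ = ∑ π : Equiv.Perm (Fin n), seqWeight (maxKernel le lam) π := by
        simp only [sum_filter, seqWeight_maxKernel]
    _ = ∑ g : Fin n → Fin n with univ.image g = univ, seqWeight (maxKernel le lam) g :=
        sum_perm_eq_sum_image_eq_univ _
    _ = 1 := sum_seqWeight_eq_one _ (fun S hS => sum_maxKernel le lam hlam (hmax S hS))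
        (card_fin n)

end WeightedShapley

lemma maxSet_opLe_nonempty {n m : ℕ} (blk : Fin n → Fin m) {S : Finset (Fin n)}
    (hS : S.Nonempty) : (maxSet (opLe blk) S).Nonempty := by
  obtain ⟨i, hiS, hi⟩ := S.exists_max_image blk hS
  refine ⟨i, mem_filter.2 ⟨hiS, fun j hj hle => ?_⟩⟩
  exact hle.resolve_right (not_lt.2 (hi j hj))

theorem stmt2_general {n m : ℕ} (blk : Fin n → Fin m)
    (lam : Fin n → ℝ) (hlam : ∀ i, 0 < lam i) :
    (∀ π : Equiv.Perm (Fin n),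
        0 ≤ ∏ t : Fin n,
          lam (π t) / ∑ k ∈ maxSet (opLe blk) (prefixSet π (t.1 + 1)), lam k) ∧
    (∑ π ∈ Finset.univ.filter (fun σ => IsLinExt (opLe blk) σ),
        ∏ t : Fin n,
          lam (π t) / ∑ k ∈ maxSet (opLe blk) (prefixSet π (t.1 + 1)), lam k) = 1 :=
  ⟨fun _ => prod_nonneg fun _ _ => div_nonneg (hlam _).le (sum_nonneg fun k _ => (hlam k).le),
    sum_isLinExt_prod_eq_one _ lam hlam fun _ => maxSet_opLe_nonempty blk⟩

theorem stmt2 {n m : ℕ} (blk : Fin n → Fin m) (hsurj : Function.Surjective blk)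
    (lam : Fin n → ℝ) (hlam : ∀ i, 0 < lam i) :
    (∀ π : Equiv.Perm (Fin n),
        0 ≤ ∏ t : Fin n,
          lam (π t) / ∑ k ∈ maxSet (opLe blk) (prefixSet π (t.1 + 1)), lam k) ∧
    (∑ π ∈ Finset.univ.filter (fun σ => IsLinExt (opLe blk) σ),
        ∏ t : Fin n,
          lam (π t) / ∑ k ∈ maxSet (opLe blk) (prefixSet π (t.1 + 1)), lam k) = 1 :=
  stmt2_general blk lam hlam
end

section
/- In a random order value with p supported on linear extensions, for a feasible set T and the elementary game u_T, the value ψ_i(u_T) equals the probability under p that i is the last element of T to appear in π, and this probability is zero unless i ∈ max_⪯(T); moreover ∑_{i ∈ max_⪯(T)} ψ_i(u_T) = 1. -/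
/-!
The marginal contribution of `i` to `u_T` along `π` is `1` exactly when `i ∈ T` and every other
element of `T` precedes `i`, i.e. when `i` is the last element of `T` in `π`; averaging over `p`
gives the first claim. In a linear extension the last element of `T` is `⪯`-maximal in `T`, and
every order has exactly one last element of a nonempty `T`, so the values on `max_⪯(T)` add up
to the total mass of `p`.
-/

open Finset
open scoped Classical BigOperators

def before {n : ℕ} (π : Equiv.Perm (Fin n)) (i : Fin n) : Finset (Fin n) :=
  Finset.univ.filter fun j => (π.symm j : ℕ) < (π.symm i : ℕ)

noncomputable def rov {n : ℕ} (p : Equiv.Perm (Fin n) → ℝ) (U : Finset (Fin n) → ℝ)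
    (i : Fin n) : ℝ :=
  ∑ π : Equiv.Perm (Fin n), p π * (U (insert i (before π i)) - U (before π i))

abbrev IsLastIn {n : ℕ} (π : Equiv.Perm (Fin n)) (T : Finset (Fin n)) (i : Fin n) : Prop :=
  i ∈ T ∧ ∀ j ∈ T, (π.symm j : ℕ) ≤ (π.symm i : ℕ)

theorem ite_subset_insert_sub_ite_subset {α R : Type*} [DecidableEq α] [AddGroupWithOne R]
    {S T : Finset α} {i : α} (hi : i ∉ S) :
    ((if T ⊆ insert i S then (1 : R) else 0) - if T ⊆ S then 1 else 0) =
      if i ∈ T ∧ T ⊆ insert i S then 1 else 0 := by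
  by_cases hiT : i ∈ T
  · have hTS : ¬ T ⊆ S := fun h => hi (h hiT)
    simp only [hiT, hTS, true_and, if_false, sub_zero]
  · simp only [hiT, false_and, if_false, Finset.subset_insert_iff_of_notMem hiT, sub_self]

theorem notMem_before {n : ℕ} (π : Equiv.Perm (Fin n)) (i : Fin n) : i ∉ before π i := by
  simp [before]

theorem subset_insert_before_iff {n : ℕ} {π : Equiv.Perm (Fin n)} {T : Finset (Fin n)}
    {i : Fin n} : T ⊆ insert i (before π i) ↔ ∀ j ∈ T, (π.symm j : ℕ) ≤ (π.symm i : ℕ) := by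
  refine forall₂_congr fun j _ => ?_
  simp only [before, mem_insert, mem_filter, mem_univ, true_and, le_iff_eq_or_lt, Fin.val_inj,
    π.symm.injective.eq_iff]

theorem rov_unanimity {n : ℕ} (p : Equiv.Perm (Fin n) → ℝ) (T : Finset (Fin n)) (i : Fin n) :
    rov p (fun S => if T ⊆ S then (1 : ℝ) else 0) i =
      ∑ π, p π * if IsLastIn π T i then 1 else 0 := by
  refine Finset.sum_congr rfl fun π _ => ?_
  rw [ite_subset_insert_sub_ite_subset (notMem_before π i)]
  simp only [subset_insert_before_iff]

theorem IsLastIn.mem_maxSet {n : ℕ} {le : Fin n → Fin n → Prop} {π : Equiv.Perm (Fin n)}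
    {T : Finset (Fin n)} {i : Fin n} (hπ : IsLinExt le π) (hi : IsLastIn π T i) :
    i ∈ maxSet le T := by
  refine mem_filter.2 ⟨hi.1, fun j hj hij => by_contra fun hne => ?_⟩
  exact (hπ i j hij hne).not_ge (hi.2 j hj)

theorem existsUnique_isLastIn {n : ℕ} (π : Equiv.Perm (Fin n)) {T : Finset (Fin n)}
    (hT : T.Nonempty) : ∃! i, IsLastIn π T i := by
  obtain ⟨i, hi, hlast⟩ := T.exists_max_image (fun j => (π.symm j : ℕ)) hT
  refine ⟨i, ⟨hi, hlast⟩, fun j ⟨hj, hjlast⟩ => π.symm.injective (Fin.ext ?_)⟩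
  exact le_antisymm (hlast j hj) (hjlast i hi)

theorem sum_maxSet_ite_isLastIn {n : ℕ} {le : Fin n → Fin n → Prop} {π : Equiv.Perm (Fin n)}
    {T : Finset (Fin n)} (hπ : IsLinExt le π) (hT : T.Nonempty) :
    ∑ i ∈ maxSet le T, (if IsLastIn π T i then (1 : ℝ) else 0) = 1 := by
  obtain ⟨i₀, hi₀, huniq⟩ := existsUnique_isLastIn π hT
  rw [Finset.sum_eq_single i₀ (fun i _ hne => if_neg fun hi => hne (huniq i hi))
    (fun hnot => absurd (hi₀.mem_maxSet hπ) hnot), if_pos hi₀]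

theorem stmt10_general {n : ℕ} (le : Fin n → Fin n → Prop)
    (p : Equiv.Perm (Fin n) → ℝ)
    (hp1 : ∑ π : Equiv.Perm (Fin n), p π = 1)
    (hsupp : ∀ π, p π ≠ 0 → IsLinExt le π)
    (T : Finset (Fin n)) (hTne : T.Nonempty) :
    (∀ i : Fin n,
        rov p (fun S => if T ⊆ S then (1 : ℝ) else 0) i =
          ∑ π ∈ Finset.univ.filter
              (fun π : Equiv.Perm (Fin n) =>
                i ∈ T ∧ ∀ j ∈ T, (π.symm j : ℕ) ≤ (π.symm i : ℕ)), p π) ∧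
    (∀ i : Fin n, i ∉ maxSet le T →
        rov p (fun S => if T ⊆ S then (1 : ℝ) else 0) i = 0) ∧
    ∑ i ∈ maxSet le T, rov p (fun S => if T ⊆ S then (1 : ℝ) else 0) i = 1 := by
  have hlast (i : Fin n) : rov p (fun S => if T ⊆ S then (1 : ℝ) else 0) i =
      ∑ π ∈ Finset.univ.filter (fun π => IsLastIn π T i), p π := by
    simp only [rov_unanimity, Finset.sum_filter, mul_ite, mul_one, mul_zero]
  refine ⟨hlast, fun i hi => ?_, ?_⟩
  · refine (hlast i).trans (Finset.sum_eq_zero fun π hπ => by_contra fun hp => ?_)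
    exact hi ((mem_filter.1 hπ).2.mem_maxSet (hsupp π hp))
  · simp only [rov_unanimity]
    rw [Finset.sum_comm]
    refine (Finset.sum_congr rfl fun π _ => ?_).trans hp1
    rw [← Finset.mul_sum]
    by_cases hp : p π = 0
    · rw [hp, zero_mul]
    · rw [sum_maxSet_ite_isLastIn (hsupp π hp) hTne, mul_one]

theorem stmt10 {n : ℕ} (le : Fin n → Fin n → Prop) (hle : IsPartialOrder (Fin n) le)
    (p : Equiv.Perm (Fin n) → ℝ) (hp0 : ∀ π, 0 ≤ p π)
    (hp1 : ∑ π : Equiv.Perm (Fin n), p π = 1)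
    (hsupp : ∀ π, p π ≠ 0 → IsLinExt le π)
    (T : Finset (Fin n)) (hTne : T.Nonempty)
    (hT : ∀ i ∈ T, ∀ j, le j i → j ∈ T) :
    (∀ i : Fin n,
        rov p (fun S => if T ⊆ S then (1 : ℝ) else 0) i =
          ∑ π ∈ Finset.univ.filter
              (fun π : Equiv.Perm (Fin n) =>
                i ∈ T ∧ ∀ j ∈ T, (π.symm j : ℕ) ≤ (π.symm i : ℕ)), p π) ∧
    (∀ i : Fin n, i ∉ maxSet le T →
        rov p (fun S => if T ⊆ S then (1 : ℝ) else 0) i = 0) ∧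
    ∑ i ∈ maxSet le T, rov p (fun S => if T ⊆ S then (1 : ℝ) else 0) i = 1 :=
  stmt10_general le p hp1 hsupp T hTne
end

section
/- Limiting case at a globally maximal node: fix poset ([n],⪯), i ∈ max_⪯([n]), and weights λ with all λ_j fixed for j ≠ i. Let ⪯' be the partial order obtained from ⪯ by adding j ≺' i for every j ∈ max_⪯([n])\{i} (and taking the transitive closure). Then ⪯' is again a partial order, and for every permutation π, lim_{λ_i → ∞} p^{(⪯,λ)}(π) = p^{(⪯',λ')}(π)·𝟙[π ∈ Π^{⪯'}], where λ' agrees with λ off i and λ'_i > 0 is arbitrary. -/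
open Finset
open scoped Classical BigOperators

def addRel {n : ℕ} (le : Fin n → Fin n → Prop) (i : Fin n) : Fin n → Fin n → Prop :=
  Relation.TransGen
    (fun a b => le a b ∨ (a ∈ maxSet le Finset.univ ∧ a ≠ i ∧ b = i))

section Aux

variable {n : ℕ} {le : Fin n → Fin n → Prop}

theorem myExistsMax (hle : IsPartialOrder (Fin n) le)
    (S : Finset (Fin n)) (hS : S.Nonempty) : ∃ m ∈ S, ∀ j ∈ S, le m j → m = j := by
  letI P : Preorder (Fin n) :=
    { le := le, lt := fun a b => le a b ∧ ¬ le b a,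
      le_refl := hle.refl, le_trans := hle.trans,
      lt_iff_le_not_ge := fun _ _ => Iff.rfl }
  obtain ⟨m, hm, hmax⟩ : ∃ m ∈ S, ∀ x ∈ S, ¬ P.lt m x := by
    obtain ⟨m, hm, hmax⟩ := @Finset.exists_maximal _ P.toLE _ S hS
    exact ⟨m, hm, fun x hx hlt => hlt.2 (hmax hx hlt.1)⟩
  refine ⟨m, hm, fun j hj hmj => ?_⟩
  by_contra hne
  exact hmax j hj ⟨hmj, fun hjm => hne (hle.antisymm _ _ hmj hjm)⟩

theorem maxSet_nonempty (hle : IsPartialOrder (Fin n) le)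
    {S : Finset (Fin n)} (hS : S.Nonempty) : (maxSet le S).Nonempty := by
  obtain ⟨m, hm, hmax⟩ := myExistsMax hle S hS
  exact ⟨m, Finset.mem_filter.2 ⟨hm, hmax⟩⟩

theorem prefixSet_mem {π : Equiv.Perm (Fin n)} {t : ℕ} {j : Fin n} :
    j ∈ prefixSet π t ↔ (π.symm j : ℕ) < t := by
  simp [prefixSet]

theorem prefixSet_nonempty (π : Equiv.Perm (Fin n)) (t : Fin n) :
    (prefixSet π (t.1 + 1)).Nonempty :=
  ⟨π t, prefixSet_mem.2 (by simp)⟩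

theorem prefixSet_full (π : Equiv.Perm (Fin n)) : prefixSet π n = Finset.univ := by
  ext j; simp [prefixSet, Fin.is_lt]

/-- positivity of pasvW -/
theorem pasvW_pos (hle : IsPartialOrder (Fin n) le) {lam : Fin n → ℝ}
    (hlam : ∀ j, 0 < lam j) (π : Equiv.Perm (Fin n)) : 0 < pasvW le lam π := by
  refine Finset.prod_pos fun t _ => ?_
  have hne : (maxSet le (prefixSet π (t.1 + 1))).Nonempty :=
    maxSet_nonempty hle (prefixSet_nonempty π t)
  refine div_pos (mul_pos (hlam _) ?_) (Finset.sum_pos (fun k _ => hlam k) hne)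
  exact_mod_cast Finset.card_pos.2 hne

variable {i : Fin n}

theorem hi_max (hi : i ∈ maxSet le Finset.univ) : ∀ j, le i j → i = j := by
  intro j h
  exact (Finset.mem_filter.1 hi).2 j (Finset.mem_univ j) h

theorem addRel_iff (hle : IsPartialOrder (Fin n) le) (hi : i ∈ maxSet le Finset.univ)
    {a b : Fin n} :
    addRel le i a b ↔ le a b ∨ (b = i ∧ ∃ g ∈ maxSet le Finset.univ, g ≠ i ∧ le a g) := by
  constructor
  · intro h
    induction h with
    | single h =>
      rcases h with h | ⟨hg, hgi, hb⟩
      · exact Or.inl h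
      · exact Or.inr ⟨hb, _, hg, hgi, hle.refl a⟩
    | tail _ hstep ih =>
      rename_i b c _
      rcases hstep with hbc | ⟨hbmax, hbi, hc⟩
      · rcases ih with hab | ⟨hbI, g, hg, hgi, hag⟩
        · exact Or.inl (hle.trans _ _ _ hab hbc)
        · -- b = i and le b c forces c = i by maximality of i
          subst hbI
          have : b = c := hi_max hi c hbc
          exact Or.inr ⟨this ▸ rfl, g, hg, hgi, hag⟩
      · rcases ih with hab | ⟨hbI, _⟩
        · exact Or.inr ⟨hc, b, hbmax, hbi, hab⟩
        · exact absurd hbI hbi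
  · rintro (h | ⟨hb, g, hg, hgi, hag⟩)
    · exact Relation.TransGen.single (Or.inl h)
    · exact Relation.TransGen.head (Or.inl hag)
        (Relation.TransGen.single (Or.inr ⟨hg, hgi, hb⟩))

theorem le_of_addRel (hle : IsPartialOrder (Fin n) le) (hi : i ∈ maxSet le Finset.univ)
    {a b : Fin n} (hb : b ≠ i) (h : addRel le i a b) : le a b := by
  rcases (addRel_iff hle hi).1 h with h | ⟨hbI, _⟩
  · exact h
  · exact absurd hbI hb

theorem addRel_partialOrder (hle : IsPartialOrder (Fin n) le)
    (hi : i ∈ maxSet le Finset.univ) : IsPartialOrder (Fin n) (addRel le i) := by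
  refine { refl := fun a => Relation.TransGen.single (Or.inl (hle.refl a)),
           trans := fun a b c hab hbc => Relation.TransGen.trans hab hbc,
           antisymm := fun a b hab hba => ?_ }
  rcases (addRel_iff hle hi).1 hab with h1 | ⟨hb, g, hg, hgi, hag⟩
  · rcases (addRel_iff hle hi).1 hba with h2 | ⟨ha, _⟩
    · exact hle.antisymm _ _ h1 h2
    · exact ha.trans (hi_max hi b (ha ▸ h1))
  · rcases (addRel_iff hle hi).1 hba with h2 | ⟨ha, _⟩
    · exact (hi_max hi a (hb ▸ h2)).symm.trans hb.symm
    · exact ha.trans hb.symm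

theorem maxSet_addRel_of_not_mem (hle : IsPartialOrder (Fin n) le)
    (hi : i ∈ maxSet le Finset.univ) {S : Finset (Fin n)} (hiS : i ∉ S) :
    maxSet (addRel le i) S = maxSet le S := by
  ext a
  simp only [maxSet, Finset.mem_filter]
  constructor
  · rintro ⟨ha, hmax⟩
    exact ⟨ha, fun j hj hle' => hmax j hj (Relation.TransGen.single (Or.inl hle'))⟩
  · rintro ⟨ha, hmax⟩
    refine ⟨ha, fun j hj hr => ?_⟩
    have hji : j ≠ i := fun h => hiS (h ▸ hj)
    exact hmax j hj (le_of_addRel hle hi hji hr)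

theorem maxSet_addRel_univ (hle : IsPartialOrder (Fin n) le)
    (hi : i ∈ maxSet le Finset.univ) :
    maxSet (addRel le i) Finset.univ = {i} := by
  ext a
  simp only [maxSet, Finset.mem_filter, Finset.mem_univ, true_and, Finset.mem_singleton]
  constructor
  · intro hmax
    by_contra hai
    by_cases ha : a ∈ maxSet le Finset.univ
    · have : addRel le i a i := Relation.TransGen.single (Or.inr ⟨ha, hai, rfl⟩)
      exact hai (hmax i trivial this)
    · have : ∃ j, le a j ∧ a ≠ j := by
        by_contra hc
        push_neg at hc
        exact ha (Finset.mem_filter.2 ⟨Finset.mem_univ a, fun j _ hj => hc j hj⟩)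
      obtain ⟨j, haj, hajne⟩ := this
      exact hajne (hmax j trivial (Relation.TransGen.single (Or.inl haj)))
  · rintro rfl
    intro j _ hr
    rcases (addRel_iff hle hi).1 hr with h | ⟨hj, _⟩
    · exact hi_max hi j h
    · exact hj.symm

theorem linext_addRel_iff (hle : IsPartialOrder (Fin n) le)
    (hi : i ∈ maxSet le Finset.univ) (π : Equiv.Perm (Fin n)) :
    IsLinExt (addRel le i) π ↔ IsLinExt le π ∧ (π.symm i : ℕ) = n - 1 := by
  have hn : 0 < n := i.pos
  constructor
  · intro h
    have hext : IsLinExt le π := fun a b hab hne =>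
      h a b (Relation.TransGen.single (Or.inl hab)) hne
    refine ⟨hext, ?_⟩
    -- every j ≠ i is before i
    have hbefore : ∀ j : Fin n, j ≠ i → (π.symm j : ℕ) < (π.symm i : ℕ) := by
      intro j hj
      -- j is below some maximal element
      obtain ⟨g, hg, hgmax⟩ := myExistsMax hle (Finset.univ.filter fun k => le j k)
        ⟨j, Finset.mem_filter.2 ⟨Finset.mem_univ j, hle.refl j⟩⟩
      have hjg : le j g := (Finset.mem_filter.1 hg).2
      have hgM : g ∈ maxSet le Finset.univ := by
        refine Finset.mem_filter.2 ⟨Finset.mem_univ g, fun k _ hgk => ?_⟩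
        exact hgmax k (Finset.mem_filter.2 ⟨Finset.mem_univ k,
          hle.trans _ _ _ hjg hgk⟩) hgk
      have : addRel le i j i := by
        by_cases hgi : g = i
        · exact (addRel_iff hle hi).2 (Or.inl (hgi ▸ hjg))
        · exact (addRel_iff hle hi).2 (Or.inr ⟨rfl, g, hgM, hgi, hjg⟩)
      exact h j i this hj
    -- so π.symm i = n-1
    set t0 : Fin n := ⟨n - 1, by omega⟩ with ht0def
    by_cases hpt : π t0 = i
    · have h1 : π.symm i = t0 := by rw [← hpt]; simp
      rw [h1]
    · have hlt := hbefore (π t0) hpt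
      have h2 : (π.symm : Fin n → Fin n) (π t0) = t0 := by simp
      rw [h2] at hlt
      have h3 : (t0 : ℕ) = n - 1 := rfl
      have h4 := (π.symm i).is_lt
      omega
  · rintro ⟨hext, hlast⟩
    intro a b hab hne
    by_cases hb : b = i
    · have hai : a ≠ i := fun h => hne (h.trans hb.symm)
      have h3 : (π.symm a : ℕ) ≠ n - 1 := by
        intro h
        apply hai
        have h5 : π.symm a = π.symm i := Fin.ext (by rw [h, hlast])
        simpa using congrArg π h5
      have h2 := (π.symm a).is_lt
      rw [hb, hlast]
      omega
    · exact hext a b (le_of_addRel hle hi hb hab) hne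

end Aux

section Limits

variable {n : ℕ} {le : Fin n → Fin n → Prop} {i : Fin n}

theorem fact_tendsto_main (c A : ℝ) :
    Filter.Tendsto (fun x : ℝ => x * c / (x + A)) Filter.atTop (nhds c) := by
  have h1 : Filter.Tendsto (fun x : ℝ => x + A) Filter.atTop Filter.atTop :=
    Filter.tendsto_atTop_add_const_right _ A Filter.tendsto_id
  have h2 : Filter.Tendsto (fun x : ℝ => A / (x + A)) Filter.atTop (nhds 0) :=
    Filter.Tendsto.div_atTop tendsto_const_nhds h1
  have h3 : Filter.Tendsto (fun x : ℝ => (1 - A / (x + A)) * c) Filter.atTop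
      (nhds ((1 - 0) * c)) :=
    (Filter.Tendsto.sub (tendsto_const_nhds (x := (1 : ℝ))) h2).mul tendsto_const_nhds
  rw [sub_zero, one_mul] at h3
  refine h3.congr' ?_
  filter_upwards [Filter.eventually_gt_atTop (-A)] with x hx
  have hx0 : x + A ≠ 0 := by linarith
  field_simp
  ring

theorem fact_tendsto_zero (b A : ℝ) :
    Filter.Tendsto (fun x : ℝ => b / (x + A)) Filter.atTop (nhds 0) := by
  have h1 : Filter.Tendsto (fun x : ℝ => x + A) Filter.atTop Filter.atTop :=
    Filter.tendsto_atTop_add_const_right _ A Filter.tendsto_id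
  exact Filter.Tendsto.div_atTop tendsto_const_nhds h1

theorem sum_update_mem (lam : Fin n → ℝ) (x : ℝ) {M : Finset (Fin n)} (hiM : i ∈ M) :
    ∑ k ∈ M, Function.update lam i x k = x + ∑ k ∈ M.erase i, lam k := by
  rw [← Finset.add_sum_erase _ _ hiM]
  congr 1
  · simp
  · exact Finset.sum_congr rfl fun k hk =>
      Function.update_of_ne (Finset.ne_of_mem_erase hk) _ _

theorem sum_update_not_mem (lam : Fin n → ℝ) (x : ℝ) {M : Finset (Fin n)} (hiM : i ∉ M) :
    ∑ k ∈ M, Function.update lam i x k = ∑ k ∈ M, lam k :=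
  Finset.sum_congr rfl fun k hk =>
    Function.update_of_ne (fun h => hiM (by rw [← h]; exact hk)) _ _

noncomputable def Lfun (le : Fin n → Fin n → Prop) (i : Fin n) (lam : Fin n → ℝ)
    (σ : Equiv.Perm (Fin n)) (t : Fin n) : ℝ :=
  if σ t = i then ((maxSet le (prefixSet σ (t.1 + 1))).card : ℝ)
  else if (σ.symm i : ℕ) < t.1 then 0
  else lam (σ t) * (maxSet le (prefixSet σ (t.1 + 1))).card /
      ∑ k ∈ maxSet le (prefixSet σ (t.1 + 1)), lam k

theorem tendsto_W (hi : i ∈ maxSet le Finset.univ) (lam : Fin n → ℝ)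
    (σ : Equiv.Perm (Fin n)) :
    Filter.Tendsto (fun x : ℝ => pasvW le (Function.update lam i x) σ)
      Filter.atTop (nhds (∏ t : Fin n, Lfun le i lam σ t)) := by
  simp only [pasvW]
  refine tendsto_finset_prod _ fun t _ => ?_
  set M := maxSet le (prefixSet σ (t.1 + 1)) with hM
  by_cases h1 : σ t = i
  · have ht : σ.symm i = t := by rw [← h1]; simp
    have hiM : i ∈ M := by
      refine Finset.mem_filter.2 ⟨prefixSet_mem.2 (by rw [ht]; omega),
        fun j _ hj => hi_max hi j hj⟩
    have hnum : ∀ x : ℝ, Function.update lam i x (σ t) = x := by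
      intro x; rw [h1]; simp
    rw [Lfun, if_pos h1]
    refine (fact_tendsto_main (M.card : ℝ) (∑ k ∈ M.erase i, lam k)).congr fun x => ?_
    rw [hnum, sum_update_mem lam x hiM]
  · have hnum : ∀ x : ℝ, Function.update lam i x (σ t) = lam (σ t) := fun x =>
      Function.update_of_ne h1 _ _
    have hti : σ.symm i ≠ t := fun h => h1 (by rw [← h]; simp)
    by_cases h2 : (σ.symm i : ℕ) < t.1
    · have hiM : i ∈ M := by
        refine Finset.mem_filter.2 ⟨prefixSet_mem.2 (by omega),
          fun j _ hj => hi_max hi j hj⟩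
      rw [Lfun, if_neg h1, if_pos h2]
      refine (fact_tendsto_zero (lam (σ t) * (M.card : ℝ))
        (∑ k ∈ M.erase i, lam k)).congr fun x => ?_
      rw [hnum, sum_update_mem lam x hiM]
    · have hiM : i ∉ M := by
        intro hmem
        have := prefixSet_mem.1 (Finset.mem_filter.1 hmem).1
        have hne : (σ.symm i : ℕ) ≠ t.1 := fun h => hti (Fin.ext h)
        omega
      rw [Lfun, if_neg h1, if_neg h2]
      refine tendsto_const_nhds.congr fun x => ?_
      rw [hnum, sum_update_not_mem lam x hiM]

theorem prod_L_eq (hle : IsPartialOrder (Fin n) le) (hi : i ∈ maxSet le Finset.univ)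
    (lam lam' : Fin n → ℝ) (hlam'i : 0 < lam' i)
    (hagree : ∀ j, j ≠ i → lam' j = lam j) (σ : Equiv.Perm (Fin n))
    (hlast : (σ.symm i : ℕ) = n - 1) :
    ∏ t : Fin n, Lfun le i lam σ t =
      ((maxSet le Finset.univ).card : ℝ) * pasvW (addRel le i) lam' σ := by
  have hn : 0 < n := i.pos
  set t0 : Fin n := σ.symm i with ht0
  have hσt0 : σ t0 = i := by simp [ht0]
  have hfull : prefixSet σ (t0.1 + 1) = Finset.univ := by
    have : t0.1 + 1 = n := by omega
    rw [this, prefixSet_full]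
  rw [← Finset.mul_prod_erase Finset.univ _ (Finset.mem_univ t0),
    pasvW, ← Finset.mul_prod_erase Finset.univ _ (Finset.mem_univ t0)]
  have hL0 : Lfun le i lam σ t0 = ((maxSet le Finset.univ).card : ℝ) := by
    rw [Lfun, if_pos hσt0, hfull]
  have hP0 : lam' (σ t0) * ((maxSet (addRel le i) (prefixSet σ (t0.1 + 1))).card : ℝ) /
      ∑ k ∈ maxSet (addRel le i) (prefixSet σ (t0.1 + 1)), lam' k = 1 := by
    rw [hfull, maxSet_addRel_univ hle hi, hσt0]
    simp [ne_of_gt hlam'i]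
  have hrest : ∀ t ∈ Finset.univ.erase t0, Lfun le i lam σ t =
      lam' (σ t) * ((maxSet (addRel le i) (prefixSet σ (t.1 + 1))).card : ℝ) /
        ∑ k ∈ maxSet (addRel le i) (prefixSet σ (t.1 + 1)), lam' k := by
    intro t ht
    have htne : t ≠ t0 := Finset.ne_of_mem_erase ht
    have hσt : σ t ≠ i := fun h => htne (by rw [ht0, ← h]; simp)
    have htval : t.1 < n - 1 := by
      have h1 : t.1 < n := t.is_lt
      have h2 : t.1 ≠ n - 1 := fun h => htne (Fin.ext (by rw [h, ht0, hlast]))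
      omega
    have hnotmem : i ∉ prefixSet σ (t.1 + 1) := by
      intro hmem
      have h9 := prefixSet_mem.1 hmem
      rw [← ht0] at h9
      omega
    have hms : maxSet (addRel le i) (prefixSet σ (t.1 + 1)) =
        maxSet le (prefixSet σ (t.1 + 1)) :=
      maxSet_addRel_of_not_mem hle hi hnotmem
    have hiM : i ∉ maxSet le (prefixSet σ (t.1 + 1)) := fun h =>
      hnotmem (Finset.mem_filter.1 h).1
    have hnlt : ¬ (σ.symm i : ℕ) < t.1 := by rw [← ht0]; omega
    rw [Lfun, if_neg hσt, if_neg hnlt, hms, hagree (σ t) hσt]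
    congr 1
    exact (Finset.sum_congr rfl fun k hk =>
      (hagree k (fun h => hiM (h ▸ hk))).symm)
  rw [hL0, hP0, one_mul, Finset.prod_congr rfl hrest]

theorem prod_L_zero (lam : Fin n → ℝ) (σ : Equiv.Perm (Fin n))
    (hn : 0 < n) (h : (σ.symm i : ℕ) ≠ n - 1) :
    ∏ t : Fin n, Lfun le i lam σ t = 0 := by
  set t0 : Fin n := ⟨n - 1, by omega⟩ with ht0
  refine Finset.prod_eq_zero (Finset.mem_univ t0) ?_
  have h1 : σ t0 ≠ i := by
    intro hc
    apply h
    have : σ.symm i = t0 := by rw [← hc]; simp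
    rw [this]
  have h2 : (σ.symm i : ℕ) < t0.1 := by
    have := (σ.symm i).is_lt
    have ht0v : (t0 : ℕ) = n - 1 := rfl
    omega
  rw [Lfun, if_neg h1, if_pos h2]

end Limits

section Exist

variable {n : ℕ}

theorem exists_linext_perm (r : Fin n → Fin n → Prop) (hr : IsPartialOrder (Fin n) r) :
    ∃ σ : Equiv.Perm (Fin n), IsLinExt r σ := by
  haveI := hr
  obtain ⟨s, hs, hrs⟩ := extend_partialOrder r
  haveI hsl : IsLinearOrder (Fin n) s := hs
  haveI : DecidableRel s := Classical.decRel s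
  set l : List (Fin n) := Finset.univ.sort s with hl
  have hlen : l.length = n := by rw [hl, Finset.length_sort]; simp
  have hnodup : l.Nodup := Finset.sort_nodup Finset.univ s
  have hsorted : List.Pairwise s l := Finset.pairwise_sort Finset.univ s
  set f : Fin n → Fin n := fun t => l.get (Fin.cast hlen.symm t) with hf
  have hinj : Function.Injective f := by
    intro a b hab
    have h2 := List.nodup_iff_injective_get.1 hnodup hab
    simpa [Fin.ext_iff] using h2
  let σ := Equiv.ofBijective f (Finite.injective_iff_bijective.mp hinj)
  have hσf : ∀ x, σ x = f x := fun _ => rfl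
  refine ⟨σ, fun a b hab hne => ?_⟩
  have hfa : f (σ.symm a) = a := by rw [← hσf]; exact σ.apply_symm_apply a
  have hfb : f (σ.symm b) = b := by rw [← hσf]; exact σ.apply_symm_apply b
  by_contra hc
  push_neg at hc
  have hne2 : σ.symm a ≠ σ.symm b := fun h => hne (by rw [← hfa, ← hfb, h])
  have hlt : (σ.symm b : ℕ) < (σ.symm a : ℕ) := by
    rcases lt_or_eq_of_le hc with h | h
    · exact h
    · exact absurd (Fin.ext h.symm) hne2
  have hsba : s b a := by
    rw [← hfa, ← hfb]
    exact hsorted.rel_get_of_lt hlt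
  have hsab : s a b := hrs a b hab
  exact hne (hsl.antisymm a b hsab hsba)

end Exist

section Final

variable {n : ℕ} {le : Fin n → Fin n → Prop} {i : Fin n}

theorem sum_L (hle : IsPartialOrder (Fin n) le) (hi : i ∈ maxSet le Finset.univ)
    (lam lam' : Fin n → ℝ) (hlam'i : 0 < lam' i)
    (hagree : ∀ j, j ≠ i → lam' j = lam j) (hn : 0 < n) :
    ∑ σ ∈ Finset.univ.filter (fun σ => IsLinExt le σ), ∏ t : Fin n, Lfun le i lam σ t
      = ((maxSet le Finset.univ).card : ℝ) *
        ∑ σ ∈ Finset.univ.filter (fun σ => IsLinExt (addRel le i) σ),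
          pasvW (addRel le i) lam' σ := by
  have hsplit : ∀ σ ∈ Finset.univ.filter (fun σ => IsLinExt le σ),
      ∏ t : Fin n, Lfun le i lam σ t =
        if (σ.symm i : ℕ) = n - 1 then
          ((maxSet le Finset.univ).card : ℝ) * pasvW (addRel le i) lam' σ
        else 0 := by
    intro σ _
    by_cases h : (σ.symm i : ℕ) = n - 1
    · rw [if_pos h, prod_L_eq hle hi lam lam' hlam'i hagree σ h]
    · rw [if_neg h, prod_L_zero lam σ hn h]
  rw [Finset.sum_congr rfl hsplit, ← Finset.sum_filter]
  have hfe : (Finset.univ.filter (fun σ => IsLinExt le σ)).filter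
        (fun σ : Equiv.Perm (Fin n) => (σ.symm i : ℕ) = n - 1)
      = Finset.univ.filter (fun σ => IsLinExt (addRel le i) σ) := by
    rw [Finset.filter_filter]
    refine Finset.filter_congr fun σ _ => ?_
    rw [linext_addRel_iff hle hi]
  rw [hfe, Finset.mul_sum]

end Final

theorem stmt11 {n : ℕ} (le : Fin n → Fin n → Prop) (hle : IsPartialOrder (Fin n) le)
    (i : Fin n) (hi : i ∈ maxSet le Finset.univ)
    (lam : Fin n → ℝ) (hlam : ∀ j, 0 < lam j)
    (lam' : Fin n → ℝ) (hlam'i : 0 < lam' i)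
    (hagree : ∀ j, j ≠ i → lam' j = lam j)
    (π : Equiv.Perm (Fin n)) :
    IsPartialOrder (Fin n) (addRel le i) ∧
    Filter.Tendsto (fun x : ℝ => pasvDist le (Function.update lam i x) π)
      Filter.atTop
      (nhds (pasvDist (addRel le i) lam' π *
        (if IsLinExt (addRel le i) π then (1 : ℝ) else 0))) := by
  have hpo := addRel_partialOrder hle hi
  refine ⟨hpo, ?_⟩
  have hn : 0 < n := i.pos
  have hlam' : ∀ j, 0 < lam' j := by
    intro j
    by_cases h : j = i
    · rw [h]; exact hlam'i
    · rw [hagree j h]; exact hlam j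
  have hmpos : (0 : ℝ) < ((maxSet le Finset.univ).card : ℝ) := by
    exact_mod_cast Finset.card_pos.2 ⟨i, hi⟩
  have hZpos : 0 < ∑ σ ∈ Finset.univ.filter (fun σ => IsLinExt (addRel le i) σ),
      pasvW (addRel le i) lam' σ := by
    obtain ⟨σ0, hσ0⟩ := exists_linext_perm (addRel le i) hpo
    exact Finset.sum_pos (fun σ _ => pasvW_pos hpo hlam' σ)
      ⟨σ0, Finset.mem_filter.2 ⟨Finset.mem_univ _, hσ0⟩⟩
  by_cases hπ : IsLinExt le π
  · have hden : Filter.Tendsto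
        (fun x : ℝ => ∑ σ ∈ Finset.univ.filter (fun σ => IsLinExt le σ),
          pasvW le (Function.update lam i x) σ) Filter.atTop
        (nhds (((maxSet le Finset.univ).card : ℝ) *
          ∑ σ ∈ Finset.univ.filter (fun σ => IsLinExt (addRel le i) σ),
            pasvW (addRel le i) lam' σ)) := by
      have h := tendsto_finset_sum (Finset.univ.filter (fun σ => IsLinExt le σ))
        (fun σ _ => tendsto_W hi lam σ)
      rwa [sum_L hle hi lam lam' hlam'i hagree hn] at h
    have hnum := tendsto_W hi lam π
    have hdiv := hnum.div hden (ne_of_gt (mul_pos hmpos hZpos))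
    refine Filter.Tendsto.congr (fun x => by rw [pasvDist, if_pos hπ]) ?_
    by_cases hlast : (π.symm i : ℕ) = n - 1
    · have hLE' : IsLinExt (addRel le i) π := (linext_addRel_iff hle hi π).2 ⟨hπ, hlast⟩
      rw [prod_L_eq hle hi lam lam' hlam'i hagree π hlast,
        mul_div_mul_left _ _ (ne_of_gt hmpos)] at hdiv
      rw [if_pos hLE', mul_one, pasvDist, if_pos hLE']
      exact hdiv
    · have hLE' : ¬ IsLinExt (addRel le i) π :=
        fun h => hlast ((linext_addRel_iff hle hi π).1 h).2
      rw [prod_L_zero lam π hn hlast, zero_div] at hdiv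
      rw [if_neg hLE', mul_zero]
      exact hdiv
  · have hLE' : ¬ IsLinExt (addRel le i) π :=
      fun h => hπ ((linext_addRel_iff hle hi π).1 h).1
    have hzero : (fun x : ℝ => pasvDist le (Function.update lam i x) π) = fun _ => 0 :=
      funext fun x => by rw [pasvDist, if_neg hπ]
    rw [hzero, if_neg hLE', mul_zero]
    exact tendsto_const_nhds
end
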